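/- 𝒮 ∘ 𝒮 = id_{H1} if and only if both of the following hold: a_(1) ⊗ d(a_(2)) = a_(2) ⊗ d(a_(1)) in A⊗H for all a ∈ A, and the antipode of A is involutive (S² = id_A). (Proposition 2.7(ii).) -/

import Mathlib

/-!
Everything happens in the convolution algebra of linear maps `A → A ⊗ H`. Put `j a = a ⊗ 1`,
`u a = 1 ⊗ d a` and `u' a = 1 ⊗ d (S a)`; since `d` is multiplicative, `u'` is the
convolution inverse of `u`. As `𝒮 (a ⊗ h) = 𝒮 (a ⊗ 1) (1 ⊗ h)` with `𝒮 ∘ j = (j ∘ S) * u`, and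
`Δ ∘ S = (S ⊗ S) ∘ τ ∘ Δ`, one gets `𝒮² ∘ j = u' * (j ∘ S²) * u`, so `𝒮² = id` means
`u' * (j ∘ S²) * u = j`. The condition `a₁ ⊗ d a₂ = a₂ ⊗ d a₁` says exactly that `j` and `u`
commute. Pushing `u' * (j ∘ S²) * u = j` forward along the algebra map `id ⊗ ε`, which sends
`u` and `u'` to the unit, gives `S² = id`; then `u' * j * u = j` is the commutation of `j`
and `u`.
-/

open TensorProduct

noncomputable section

variable (k A H : Type*) [Field k] [Ring A] [Ring H]
  [HopfAlgebra k A] [HopfAlgebra k H]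

/-- `t(a⊗h) = d(a)h`. -/
def tmap (d : A →ₗ[k] H) : A ⊗[k] H →ₗ[k] H :=
  LinearMap.mul' k H ∘ₗ map d LinearMap.id

/-- `s(a⊗h) = ε(a)h`. -/
def smap : A ⊗[k] H →ₗ[k] H :=
  (TensorProduct.lid k H).toLinearMap ∘ₗ map (Coalgebra.counit : A →ₗ[k] k) LinearMap.id

/-- `i(h) = 1⊗h`. -/
def imap : H →ₗ[k] A ⊗[k] H := TensorProduct.mk k A H 1

/-- The tensor-product coproduct `Δ(a⊗h) = (a₁⊗h₁) ⊗ (a₂⊗h₂)` on `H1 = A ⊗ H`. -/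
def comul1 : A ⊗[k] H →ₗ[k] (A ⊗[k] H) ⊗[k] (A ⊗[k] H) :=
  (tensorTensorTensorComm k A A H H).toLinearMap ∘ₗ
    map (Coalgebra.comul : A →ₗ[k] A ⊗[k] A) (Coalgebra.comul : H →ₗ[k] H ⊗[k] H)

/-- The tensor-product counit `ε(a⊗h) = ε(a)ε(h)` on `H1 = A ⊗ H`. -/
def counit1 : A ⊗[k] H →ₗ[k] k :=
  (TensorProduct.lid k k).toLinearMap ∘ₗ
    map (Coalgebra.counit : A →ₗ[k] k) (Coalgebra.counit : H →ₗ[k] k)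

/-- The left coaction `DL = (t⊗id)Δ`. -/
def DLmap (d : A →ₗ[k] H) : A ⊗[k] H →ₗ[k] H ⊗[k] (A ⊗[k] H) :=
  map (tmap k A H d) LinearMap.id ∘ₗ comul1 k A H

/-- The right coaction `DR = (id⊗s)Δ`. -/
def DRmap : A ⊗[k] H →ₗ[k] (A ⊗[k] H) ⊗[k] H :=
  map LinearMap.id (smap k A H) ∘ₗ comul1 k A H

/-- The second product `(a⊗h)∘(b⊗g) = ε(h) ab ⊗ g`. -/
def circ : (A ⊗[k] H) ⊗[k] (A ⊗[k] H) →ₗ[k] A ⊗[k] H :=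
  map (LinearMap.mul' k A)
      ((TensorProduct.lid k H).toLinearMap ∘ₗ map (Coalgebra.counit : H →ₗ[k] k) LinearMap.id)
    ∘ₗ (tensorTensorTensorComm k A H A H).toLinearMap

/-- The quantum groupoid antipode `𝒮(a⊗h) = S(a₁) ⊗ d(a₂)h`. -/
def SS (d : A →ₗ[k] H) : A ⊗[k] H →ₗ[k] A ⊗[k] H :=
  map (HopfAlgebra.antipode (R := k) : A →ₗ[k] A) (tmap k A H d)
    ∘ₗ (TensorProduct.assoc k A A H).toLinearMap
    ∘ₗ map (Coalgebra.comul : A →ₗ[k] A ⊗[k] A) LinearMap.id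

/-- The smash product multiplication `(a⊗h)(b⊗g) = a(h₁▷b) ⊗ h₂g`. -/
def smashMul (act : H ⊗[k] A →ₗ[k] A) :
    (A ⊗[k] H) ⊗[k] (A ⊗[k] H) →ₗ[k] A ⊗[k] H :=
  map (LinearMap.mul' k A) LinearMap.id
  ∘ₗ (TensorProduct.assoc k A A H).symm.toLinearMap
  ∘ₗ map LinearMap.id
      (map act (LinearMap.mul' k H)
        ∘ₗ (tensorTensorTensorComm k H H A H).toLinearMap)
  ∘ₗ (TensorProduct.assoc k A (H ⊗[k] H) (A ⊗[k] H)).toLinearMap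
  ∘ₗ map (map LinearMap.id (Coalgebra.comul : H →ₗ[k] H ⊗[k] H)) LinearMap.id

/-- The cotensor product `H1□H1`. -/
def cot (d : A →ₗ[k] H) : Set ((A ⊗[k] H) ⊗[k] (A ⊗[k] H)) :=
  {x | (TensorProduct.assoc k (A ⊗[k] H) H (A ⊗[k] H)).toLinearMap
        (map (DRmap k A H) LinearMap.id x) = map LinearMap.id (DLmap k A H d) x}

/-- A Hopf (algebra) crossed module. -/
structure HopfCrossedModule (act : H ⊗[k] A →ₗ[k] A) (d : A →ₗ[k] H) : Prop where
  /-- `(hg)▷a = h▷(g▷a)` -/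
  act_mul : ∀ (h g : H) (a : A), act ((h * g) ⊗ₜ[k] a) = act (h ⊗ₜ[k] act (g ⊗ₜ[k] a))
  /-- `1▷a = a` -/
  act_one : ∀ a : A, act ((1 : H) ⊗ₜ[k] a) = a
  /-- `h▷(ab) = (h₁▷a)(h₂▷b)` -/
  act_mul_alg : act ∘ₗ map LinearMap.id (LinearMap.mul' k A)
      = LinearMap.mul' k A ∘ₗ map act act
          ∘ₗ (tensorTensorTensorComm k H H A A).toLinearMap
          ∘ₗ map (Coalgebra.comul : H →ₗ[k] H ⊗[k] H) LinearMap.id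
  /-- `h▷1 = ε(h)1` -/
  act_unit : ∀ h : H, act (h ⊗ₜ[k] (1 : A)) = (Coalgebra.counit h : k) • (1 : A)
  /-- `Δ(h▷a) = (h₁▷a₁)⊗(h₂▷a₂)` -/
  act_comul : (Coalgebra.comul : A →ₗ[k] A ⊗[k] A) ∘ₗ act
      = map act act ∘ₗ (tensorTensorTensorComm k H H A A).toLinearMap
          ∘ₗ map (Coalgebra.comul : H →ₗ[k] H ⊗[k] H) (Coalgebra.comul : A →ₗ[k] A ⊗[k] A)
  /-- `ε(h▷a) = ε(h)ε(a)` -/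
  act_counit : ∀ (h : H) (a : A),
      (Coalgebra.counit (act (h ⊗ₜ[k] a)) : k) = Coalgebra.counit h * Coalgebra.counit a
  /-- `h₁ ⊗ (h₂▷a) = h₂ ⊗ (h₁▷a)` -/
  act_cocomm : map LinearMap.id act ∘ₗ (TensorProduct.assoc k H H A).toLinearMap
        ∘ₗ map (Coalgebra.comul : H →ₗ[k] H ⊗[k] H) LinearMap.id
      = map LinearMap.id act ∘ₗ (TensorProduct.assoc k H H A).toLinearMap
        ∘ₗ map ((TensorProduct.comm k H H).toLinearMap
              ∘ₗ (Coalgebra.comul : H →ₗ[k] H ⊗[k] H)) LinearMap.id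
  /-- `d` is multiplicative -/
  d_mul : ∀ a b : A, d (a * b) = d a * d b
  /-- `d(1) = 1` -/
  d_one : d 1 = 1
  /-- `d` is comultiplicative -/
  d_comul : (Coalgebra.comul : H →ₗ[k] H ⊗[k] H) ∘ₗ d
      = map d d ∘ₗ (Coalgebra.comul : A →ₗ[k] A ⊗[k] A)
  /-- `ε∘d = ε` -/
  d_counit : (Coalgebra.counit : H →ₗ[k] k) ∘ₗ d = (Coalgebra.counit : A →ₗ[k] k)
  /-- `d(h▷a) = h₁ d(a) S(h₂)` -/
  d_act : d ∘ₗ act = LinearMap.mul' k H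
      ∘ₗ map LinearMap.id (LinearMap.mul' k H
            ∘ₗ map LinearMap.id (HopfAlgebra.antipode (R := k) : H →ₗ[k] H)
            ∘ₗ (TensorProduct.comm k H H).toLinearMap)
      ∘ₗ (TensorProduct.assoc k H H H).toLinearMap
      ∘ₗ map (Coalgebra.comul : H →ₗ[k] H ⊗[k] H) d
  /-- `d(a)▷b = a₁ b S(a₂)` -/
  crossed : act ∘ₗ map d LinearMap.id = LinearMap.mul' k A
      ∘ₗ map LinearMap.id (LinearMap.mul' k A
            ∘ₗ map LinearMap.id (HopfAlgebra.antipode (R := k) : A →ₗ[k] A)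
            ∘ₗ (TensorProduct.comm k A A).toLinearMap)
      ∘ₗ (TensorProduct.assoc k A A A).toLinearMap
      ∘ₗ map (Coalgebra.comul : A →ₗ[k] A ⊗[k] A) LinearMap.id

open WithConv Coalgebra

section
variable {R C B D : Type*} [CommSemiring R] [AddCommMonoid C] [Module R C] [Coalgebra R C]
  [Semiring B] [Algebra R B] [Semiring D] [Algebra R D]

lemma includeLeft_convMul_includeRight (f : C →ₗ[R] B) (g : C →ₗ[R] D) :
    toConv ((Algebra.TensorProduct.includeLeft : B →ₐ[R] B ⊗[R] D).toLinearMap ∘ₗ f) *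
      toConv ((Algebra.TensorProduct.includeRight : D →ₐ[R] B ⊗[R] D).toLinearMap ∘ₗ g) =
      toConv (map f g ∘ₗ comul) := by
  ext c
  rw [(ℛ R c).convMul_apply]
  simp [← (ℛ R c).eq]

lemma includeRight_convMul_includeLeft (f : C →ₗ[R] B) (g : C →ₗ[R] D) :
    toConv ((Algebra.TensorProduct.includeRight : D →ₐ[R] B ⊗[R] D).toLinearMap ∘ₗ g) *
      toConv ((Algebra.TensorProduct.includeLeft : B →ₐ[R] B ⊗[R] D).toLinearMap ∘ₗ f) =
      toConv (map f g ∘ₗ (TensorProduct.comm R C C).toLinearMap ∘ₗ comul) := by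
  ext c
  rw [(ℛ R c).convMul_apply]
  simp [← (ℛ R c).eq]

lemma toConv_algHom_comp_mul_eq_one (h : B →ₐ[R] D) {f g : C →ₗ[R] B}
    (hfg : toConv f * toConv g = 1) :
    toConv (h.toLinearMap ∘ₗ f) * toConv (h.toLinearMap ∘ₗ g) = 1 := by
  apply WithConv.ext
  rw [← LinearMap.algHom_comp_convMul_distrib, hfg]
  ext; simp

lemma toConv_algHom_comp_convMul (h : B →ₐ[R] D) (f g : WithConv (C →ₗ[R] B)) :
    toConv (h.toLinearMap ∘ₗ ofConv (f * g)) =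
      toConv (h.toLinearMap ∘ₗ f.ofConv) * toConv (h.toLinearMap ∘ₗ g.ofConv) := by
  rw [LinearMap.algHom_comp_convMul_distrib, toConv_ofConv]
end

namespace HopfAlgebra
variable {R L : Type*} [CommSemiring R] [Semiring L] [HopfAlgebra R L]

/-- `τ ∘ Δ ∘ S` is a left convolution inverse of `τ ∘ Δ = (1 ⊗ ·) * (· ⊗ 1)`, and
`(S ⊗ S) ∘ Δ = (S · ⊗ 1) * (1 ⊗ S ·)` is a right one. -/
lemma comul_comp_antipode :
    comul ∘ₗ antipode R = map (antipode R) (antipode R) ∘ₗ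
      (TensorProduct.comm R L L).toLinearMap ∘ₗ (comul : L →ₗ[R] L ⊗[R] L) := by
  let τδ : L →ₐ[R] L ⊗[R] L :=
    (Algebra.TensorProduct.comm R L L).toAlgHom.comp (Bialgebra.comulAlgHom R L)
  have hτδ : τδ.toLinearMap = map LinearMap.id LinearMap.id ∘ₗ
      (TensorProduct.comm R L L).toLinearMap ∘ₗ comul := by ext; simp [τδ]
  have hleft : toConv (τδ.toLinearMap ∘ₗ antipode R) * toConv (τδ.toLinearMap ∘ₗ .id) = 1 :=
    toConv_algHom_comp_mul_eq_one τδ LinearMap.antipode_mul_id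
  have hright : toConv (τδ.toLinearMap ∘ₗ .id) *
      toConv (map (antipode R) (antipode R) ∘ₗ (comul : L →ₗ[R] L ⊗[R] L)) = 1 := by
    rw [LinearMap.comp_id, hτδ, ← includeLeft_convMul_includeRight,
      ← includeRight_convMul_includeLeft, mul_assoc, ← mul_assoc _ (toConv (_ ∘ₗ antipode R)),
      toConv_algHom_comp_mul_eq_one _ LinearMap.id_mul_antipode, one_mul,
      toConv_algHom_comp_mul_eq_one _ LinearMap.id_mul_antipode]
  have key := congrArg ofConv (left_inv_eq_right_inv hleft hright)
  ext x
  simpa [τδ, map_comm] using congrArg (TensorProduct.comm R L L) (LinearMap.congr_fun key x)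
end HopfAlgebra

section CrossedModuleAntipode
variable {k A H}

local notation "ιA" =>
  AlgHom.toLinearMap (Algebra.TensorProduct.includeLeft (R := k) (S := k) (A := A) (B := H))
local notation "ιH" =>
  AlgHom.toLinearMap (Algebra.TensorProduct.includeRight (R := k) (A := A) (B := H))

lemma SS_mul_one_tmul (d : A →ₗ[k] H) (x : A ⊗[k] H) (h : H) :
    SS k A H d (x * (1 ⊗ₜ h)) = SS k A H d x * (1 ⊗ₜ h) := by
  induction x using TensorProduct.induction_on with
  | zero => simp
  | add x y hx hy => simp [add_mul, hx, hy]
  | tmul a g =>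
    simp only [SS, LinearMap.comp_apply, map_tmul, LinearMap.id_apply,
      Algebra.TensorProduct.tmul_mul_tmul, mul_one, LinearEquiv.coe_coe]
    induction (comul a : A ⊗[k] A) using TensorProduct.induction_on with
    | zero => simp
    | add x y hx hy => simp only [add_tmul, map_add, add_mul, hx, hy]
    | tmul b c => simp [tmap, mul_assoc]

lemma SS_comp_includeLeft (d : A →ₗ[k] H) :
    SS k A H d ∘ₗ ιA = map (HopfAlgebra.antipode k) d ∘ₗ comul := by
  ext a
  simp only [SS, LinearMap.comp_apply, AlgHom.toLinearMap_apply,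
    Algebra.TensorProduct.includeLeft_apply, map_tmul, LinearMap.id_apply, LinearEquiv.coe_coe]
  induction (comul a : A ⊗[k] A) using TensorProduct.induction_on with
  | zero => simp
  | add x y hx hy => simp only [add_tmul, map_add, hx, hy]
  | tmul b c => simp [tmap]

lemma SS_comp_map_comul (d : A →ₗ[k] H) (f : A →ₗ[k] A) (g : A →ₗ[k] H) :
    SS k A H d ∘ₗ map f g ∘ₗ comul =
      ofConv (toConv (SS k A H d ∘ₗ ιA ∘ₗ f) * toConv (ιH ∘ₗ g)) := by
  ext a
  rw [(ℛ k a).convMul_apply]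
  simp [← (ℛ k a).eq, ← SS_mul_one_tmul]

lemma SS_comp_SS_comp_includeLeft (d : A →ₗ[k] H) :
    SS k A H d ∘ₗ SS k A H d ∘ₗ ιA =
      ofConv (toConv (ιH ∘ₗ d ∘ₗ HopfAlgebra.antipode k) *
        toConv (ιA ∘ₗ HopfAlgebra.antipode k ∘ₗ HopfAlgebra.antipode k) * toConv (ιH ∘ₗ d)) := by
  rw [SS_comp_includeLeft, SS_comp_map_comul, ← LinearMap.comp_assoc, SS_comp_includeLeft,
    LinearMap.comp_assoc, HopfAlgebra.comul_comp_antipode, ← LinearMap.comp_assoc,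
    ← map_comp, includeRight_convMul_includeLeft]

/-- The algebra map `id ⊗ ε : A ⊗ H → A` sends both outer factors to the convolution unit. -/
lemma antipode_comp_antipode_eq_id_of_conj_eq (d : A →ₗ[k] H) (hd : counit ∘ₗ d = counit)
    (h : toConv (ιH ∘ₗ d ∘ₗ HopfAlgebra.antipode k) *
        toConv (ιA ∘ₗ HopfAlgebra.antipode k ∘ₗ HopfAlgebra.antipode k) * toConv (ιH ∘ₗ d) =
      toConv ιA) :
    HopfAlgebra.antipode k ∘ₗ HopfAlgebra.antipode k = (LinearMap.id : A →ₗ[k] A) := by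
  let π : A ⊗[k] H →ₐ[k] A := (Algebra.TensorProduct.rid k k A).toAlgHom.comp
    (Algebra.TensorProduct.map (AlgHom.id k A) (Bialgebra.counitAlgHom k H))
  have hπA : π.toLinearMap ∘ₗ ιA = LinearMap.id := by ext; simp [π]
  have hπH : π.toLinearMap ∘ₗ ιH = Algebra.linearMap k A ∘ₗ counit := by
    ext; simp [π, Algebra.algebraMap_eq_smul_one]
  have := congrArg (fun F => toConv (π.toLinearMap ∘ₗ ofConv F)) h
  simp only [toConv_algHom_comp_convMul, ← LinearMap.comp_assoc, hπA, hπH,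
    LinearMap.id_comp] at this
  simp only [LinearMap.comp_assoc, hd, HopfAlgebra.counit_comp_antipode,
    ← LinearMap.convOne_def, one_mul, mul_one] at this
  exact toConv_injective this

lemma SS_comp_SS_eq_id_iff (d : A →ₗ[k] H) :
    SS k A H d ∘ₗ SS k A H d = LinearMap.id ↔ SS k A H d ∘ₗ SS k A H d ∘ₗ ιA = ιA := by
  refine ⟨fun h => by rw [← LinearMap.comp_assoc, h, LinearMap.id_comp], fun h => ?_⟩
  apply TensorProduct.ext'
  intro a g
  have hA : SS k A H d (SS k A H d (a ⊗ₜ 1)) = a ⊗ₜ 1 := LinearMap.congr_fun h a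
  rw [← mul_one a, ← one_mul g, ← Algebra.TensorProduct.tmul_mul_tmul, LinearMap.comp_apply,
    SS_mul_one_tmul, SS_mul_one_tmul, hA, LinearMap.id_apply]

lemma map_id_comul_eq_iff_commute (d : A →ₗ[k] H) :
    map LinearMap.id d ∘ₗ comul =
        map LinearMap.id d ∘ₗ (TensorProduct.comm k A A).toLinearMap ∘ₗ comul ↔
      toConv ιA * toConv (ιH ∘ₗ d) = toConv (ιH ∘ₗ d) * toConv ιA := by
  rw [← LinearMap.comp_id ιA, includeLeft_convMul_includeRight, includeRight_convMul_includeLeft,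
    toConv_injective.eq_iff]

end CrossedModuleAntipode

theorem statement11 (act : H ⊗[k] A →ₗ[k] A) (d : A →ₗ[k] H)
    (hcm : HopfCrossedModule k A H act d) :
    SS k A H d ∘ₗ SS k A H d = LinearMap.id
      ↔ (map LinearMap.id d ∘ₗ (Coalgebra.comul : A →ₗ[k] A ⊗[k] A)
            = map LinearMap.id d ∘ₗ (TensorProduct.comm k A A).toLinearMap
                ∘ₗ (Coalgebra.comul : A →ₗ[k] A ⊗[k] A)
          ∧ (HopfAlgebra.antipode (R := k) : A →ₗ[k] A)
              ∘ₗ (HopfAlgebra.antipode (R := k) : A →ₗ[k] A) = LinearMap.id) := by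
  let φ : A →ₐ[k] A ⊗[k] H :=
    Algebra.TensorProduct.includeRight.comp (AlgHom.ofLinearMap d hcm.d_one hcm.d_mul)
  have h_inv_mul : toConv (φ.toLinearMap ∘ₗ HopfAlgebra.antipode k) *
      toConv (φ.toLinearMap ∘ₗ .id) = 1 :=
    toConv_algHom_comp_mul_eq_one φ LinearMap.antipode_mul_id
  have h_mul_inv : toConv (φ.toLinearMap ∘ₗ .id) *
      toConv (φ.toLinearMap ∘ₗ HopfAlgebra.antipode k) = 1 :=
    toConv_algHom_comp_mul_eq_one φ LinearMap.id_mul_antipode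
  simp only [φ, AlgHom.comp_toLinearMap, AlgHom.toLinearMap_ofLinearMap, LinearMap.comp_id,
    LinearMap.comp_assoc] at h_inv_mul h_mul_inv
  rw [SS_comp_SS_eq_id_iff, SS_comp_SS_comp_includeLeft, ← toConv_injective.eq_iff, toConv_ofConv,
    map_id_comul_eq_iff_commute]
  constructor
  · intro h
    have hS := antipode_comp_antipode_eq_id_of_conj_eq d hcm.d_counit h
    rw [hS, LinearMap.comp_id] at h
    refine ⟨?_, hS⟩
    have h' := congrArg (toConv (Algebra.TensorProduct.includeRight.toLinearMap ∘ₗ d) * ·) h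
    simpa only [← mul_assoc, h_mul_inv, one_mul] using h'
  · rintro ⟨hcomm, hS⟩
    rw [hS, LinearMap.comp_id, mul_assoc, hcomm, ← mul_assoc, h_inv_mul, one_mul]
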